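/- Let A, B, C be multiplicative characters on F_q and define McCarthy's ₂F₁*(A,B;C|x) = (1/(q-1))·Σ_χ [g(Aχ)/g(A)]·[g(Bχ)/g(B)]·[g(C̄χ̄)/g(C̄)]·g(χ̄)·χ(-1)²·χ(x) (with χ(-1)^{n+1} for n=1). Then ₂F₁*(A,B;C|1) = g(A·C̄)·g(B·C̄)/(g(C̄)·g(A·B·C̄)) + q(q-1)·AB(-1)·δ(A·B·C̄)/(g(A)g(B)g(C̄)). -/

import Mathlib

/-!
After clearing the normalising Gauss sums, the left side is `(q-1)⁻¹ ∑_χ g(Aχ)g(χ̄) · g(Bχ)g(C̄χ̄)`.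
Each of the two products is a Jacobi sum times a Gauss sum that no longer depends on `χ`:
`g(X)g(Y) = J(X,Y)g(XY) + (q-1)δ(XY)X(-1)`. Writing `J(Dχ, Eχ̄) = ∑ₓ D(x)E(1-x)χ(x/(1-x))`,
orthogonality of characters collapses `∑_χ J(Aχ,χ̄)J(Bχ,C̄χ̄)` to `(q-1)J(AC̄,B)` (the two odds
ratios multiply to `1` exactly when `x + y = 1`), and it kills the cross terms `∑_χ χ(-1)J(…)`
because `-x/(1-x)` is never `1`. It remains to rewrite `J(AC̄,B)` by Gauss sums, which is immediate
unless `ABC̄ = 1`; in that case `g(X)g(X̄) = X(-1)q - (q-1)δ(X)` produces the `δ`-term.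
-/

open Finset

variable {F : Type*} [Field F] [Fintype F] [DecidableEq F]

noncomputable instance : Fintype (MulChar F ℂ) := Fintype.ofFinite _

/-- Greene's binomial coefficient `(A choose B) = B(-1)/q * J(A, B⁻¹)`. -/
noncomputable def greeneBinom (A B : MulChar F ℂ) : ℂ :=
  B (-1) / (Fintype.card F : ℂ) * ∑ x : F, A x * B⁻¹ (1 - x)

/-- Greene's finite field hypergeometric series ₂F₁. -/
noncomputable def greeneF21 (A B C : MulChar F ℂ) (x : F) : ℂ :=
  ((Fintype.card F : ℂ) / ((Fintype.card F : ℂ) - 1)) *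
    ∑ χ : MulChar F ℂ, greeneBinom (A * χ) χ * greeneBinom (B * χ) (C * χ) * χ x

/-- Greene's finite field hypergeometric series ₃F₂. -/
noncomputable def greeneF32 (A B C D E : MulChar F ℂ) (x : F) : ℂ :=
  ((Fintype.card F : ℂ) / ((Fintype.card F : ℂ) - 1)) *
    ∑ χ : MulChar F ℂ, greeneBinom (A * χ) χ * greeneBinom (B * χ) (D * χ) *
      greeneBinom (C * χ) (E * χ) * χ x

/-- Greene's finite field hypergeometric series ₄F₃. -/
noncomputable def greeneF43 (A₀ A₁ A₂ A₃ B₁ B₂ B₃ : MulChar F ℂ) (x : F) : ℂ :=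
  ((Fintype.card F : ℂ) / ((Fintype.card F : ℂ) - 1)) *
    ∑ χ : MulChar F ℂ, greeneBinom (A₀ * χ) χ * greeneBinom (A₁ * χ) (B₁ * χ) *
      greeneBinom (A₂ * χ) (B₂ * χ) * greeneBinom (A₃ * χ) (B₃ * χ) * χ x

theorem MulChar.sum_characters_eq {M R : Type*} [CommMonoid M] [Finite M] [DecidableEq M]
    [CommRing R] [IsDomain R] [HasEnoughRootsOfUnity R (Monoid.exponent Mˣ)]
    [Fintype (MulChar M R)] (a : M) :
    ∑ χ : MulChar M R, χ a = if a = 1 then (Nat.card Mˣ : R) else 0 := by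
  split_ifs with ha
  · simp [ha, ← MulChar.card_eq_card_units_of_hasEnoughRootsOfUnity M R]
  · obtain ⟨χ₀, hχ₀⟩ := MulChar.exists_apply_ne_one_of_hasEnoughRootsOfUnity M R ha
    refine eq_zero_of_mul_eq_self_left hχ₀ ?_
    simp only [Finset.mul_sum, ← MulChar.mul_apply]
    exact Fintype.sum_bijective _ (Group.mulLeft_bijective χ₀) _ _ fun _ ↦ rfl

theorem MulChar.apply_neg_one_mul_self {R R' : Type*} [CommRing R] [CommMonoidWithZero R']
    (χ : MulChar R R') : χ (-1) * χ (-1) = 1 := by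
  rw [← map_mul, neg_one_mul, neg_neg, map_one]

theorem odds_mul_odds_eq_one_iff {K : Type*} [Field K] {x y : K} (hx : x ≠ 1) (hy : y ≠ 1) :
    x * (1 - x)⁻¹ * (y * (1 - y)⁻¹) = 1 ↔ x + y = 1 := by
  have hx' : 1 - x ≠ 0 := sub_ne_zero.mpr hx.symm
  have hy' : 1 - y ≠ 0 := sub_ne_zero.mpr hy.symm
  field_simp
  constructor <;> intro h <;> linear_combination h

section

variable {K : Type*} [Field K] [Fintype K]

/- With `0⁻¹ = 0` the odds ratio `x * (1 - x)⁻¹` vanishes at `x = 1`; the hypotheses take care of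
the terms `x = 0` and `x = 1` on the right. -/
theorem sum_sum_ite_odds_mul_odds_eq_one {M : Type*} [DecidableEq K] [Semiring M] {f g : K → M}
    (hf : f 0 = 0) (hg : g 0 = 0) :
    ∑ x, ∑ y, (if x * (1 - x)⁻¹ * (y * (1 - y)⁻¹) = 1 then f x * g y else 0) =
      ∑ x, f x * g (1 - x) := by
  have h : ∀ x y : K, (if x * (1 - x)⁻¹ * (y * (1 - y)⁻¹) = 1 then f x * g y else 0) =
      if y = 1 - x then f x * g y else 0 := by
    intro x y
    rcases eq_or_ne x 1 with rfl | hx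
    · simp +contextual [hg]
    rcases eq_or_ne y 1 with rfl | hy
    · simp +contextual [hf, eq_comm (a := (1 : K)), sub_eq_self]
    exact if_congr (by rw [odds_mul_odds_eq_one_iff hx hy, eq_sub_iff_add_eq, add_comm]) rfl rfl
  simp only [h, sum_ite_eq', mem_univ, if_true]

theorem jacobiSum_mul_mul_inv_eq_sum {R : Type*} [CommRing R] (D E χ : MulChar K R) :
    jacobiSum (D * χ) (E * χ⁻¹) = ∑ x, D x * E (1 - x) * χ (x * (1 - x)⁻¹) := by
  refine sum_congr rfl fun x _ ↦ ?_
  rw [MulChar.mul_apply, MulChar.mul_apply, MulChar.inv_apply', map_mul]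
  ring

variable {ψ : AddChar K ℂ}

theorem gaussSum_ne_zero (hψ : ψ ≠ 1) (X : MulChar K ℂ) : gaussSum X ψ ≠ 0 := by
  rcases eq_or_ne X 1 with rfl | hX
  · simp [gaussSum_one_left hψ]
  · exact gaussSum_ne_zero_of_nontrivial (Nat.cast_ne_zero.mpr Fintype.card_ne_zero) hX
      (AddChar.IsPrimitive.of_ne_one hψ)

theorem gaussSum_mul_gaussSum_inv (hψ : ψ ≠ 1) (X : MulChar K ℂ) :
    gaussSum X ψ * gaussSum X⁻¹ ψ =
      X (-1) * Fintype.card K - if X = 1 then (Fintype.card K : ℂ) - 1 else 0 := by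
  rcases eq_or_ne X 1 with rfl | hX
  · simp [gaussSum_one_left hψ, MulChar.one_apply isUnit_one.neg]
  · rw [if_neg hX, sub_zero, ← mul_gaussSum_inv_eq_gaussSum X⁻¹ ψ, MulChar.inv_apply', inv_neg,
      inv_one, mul_left_comm, gaussSum_mul_gaussSum_eq_card hX (AddChar.IsPrimitive.of_ne_one hψ)]

theorem gaussSum_mul_gaussSum_eq (hψ : ψ ≠ 1) (X Y : MulChar K ℂ) :
    gaussSum X ψ * gaussSum Y ψ = jacobiSum X Y * gaussSum (X * Y) ψ +
      (if X * Y = 1 then (Fintype.card K : ℂ) - 1 else 0) * X (-1) := by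
  by_cases h : X * Y = 1
  · obtain rfl : Y = X⁻¹ := eq_inv_of_mul_eq_one_right h
    rw [if_pos h, h, gaussSum_one_left hψ, gaussSum_mul_gaussSum_inv hψ]
    rcases eq_or_ne X 1 with rfl | hX
    · simp only [inv_one, jacobiSum_one_one, MulChar.one_apply isUnit_one.neg, if_true]
      ring
    · rw [if_neg hX, jacobiSum_nontrivial_inv hX]
      ring
  · rw [if_neg h, zero_mul, add_zero, mul_comm (jacobiSum X Y), jacobiSum_mul_nontrivial h]

/- The main identity in the case `A * B * C⁻¹ = 1`, where `A * C⁻¹ = B⁻¹` and `B * C⁻¹ = A⁻¹`. -/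
theorem jacobiSum_inv_mul_gaussSum_mul_gaussSum_inv (hψ : ψ ≠ 1) (A B : MulChar K ℂ) :
    jacobiSum B⁻¹ B * (gaussSum A ψ * gaussSum A⁻¹ ψ) +
        (if A = 1 then ((Fintype.card K : ℂ) - 1) ^ 2 * (A * B) (-1) else 0) =
      (Fintype.card K : ℂ) * ((Fintype.card K : ℂ) - 1) * (A * B) (-1) -
        gaussSum A ψ * gaussSum A⁻¹ ψ * (gaussSum B ψ * gaussSum B⁻¹ ψ) := by
  have hB := gaussSum_mul_gaussSum_eq hψ B⁻¹ B
  rw [inv_mul_cancel, if_pos rfl, gaussSum_one_left hψ, MulChar.inv_apply', inv_neg,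
    inv_one] at hB
  rw [gaussSum_mul_gaussSum_inv hψ A, MulChar.mul_apply]
  rcases eq_or_ne A 1 with rfl | hA
  · simp only [if_true, MulChar.one_apply isUnit_one.neg]
    linear_combination hB
  · simp only [if_neg hA, sub_zero, add_zero]
    linear_combination A (-1) * (Fintype.card K : ℂ) * hB

variable [DecidableEq K]

theorem sum_mulChar_apply (a : K) :
    ∑ χ : MulChar K ℂ, χ a = if a = 1 then (Fintype.card K : ℂ) - 1 else 0 := by
  rw [MulChar.sum_characters_eq, Nat.card_eq_fintype_card, Fintype.card_units,
    Nat.cast_sub Fintype.card_pos, Nat.cast_one]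

theorem sum_mulChar_sum_mul_sum (f g : K → ℂ) (u v : K → K) :
    ∑ χ : MulChar K ℂ, (∑ x, f x * χ (u x)) * (∑ y, g y * χ (v y)) =
      ((Fintype.card K : ℂ) - 1) * ∑ x, ∑ y, if u x * v y = 1 then f x * g y else 0 := by
  simp only [sum_mul_sum]
  rw [sum_comm, mul_sum]
  refine sum_congr rfl fun x _ ↦ ?_
  rw [sum_comm, mul_sum]
  refine sum_congr rfl fun y _ ↦ ?_
  have h : ∀ χ : MulChar K ℂ, f x * χ (u x) * (g y * χ (v y)) = f x * g y * χ (u x * v y) :=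
    fun χ ↦ by rw [map_mul]; ring
  rw [sum_congr rfl fun χ _ ↦ h χ, ← mul_sum, sum_mulChar_apply]
  split_ifs <;> ring

theorem sum_apply_neg_one_mul_jacobiSum (D E : MulChar K ℂ) :
    ∑ χ : MulChar K ℂ, χ (-1) * jacobiSum (D * χ) (E * χ⁻¹) = 0 := by
  have h : ∀ χ : MulChar K ℂ, χ (-1) * jacobiSum (D * χ) (E * χ⁻¹) =
      ∑ x, D x * E (1 - x) * χ (-(x * (1 - x)⁻¹)) := fun χ ↦ by
    rw [jacobiSum_mul_mul_inv_eq_sum, mul_sum]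
    refine sum_congr rfl fun x _ ↦ ?_
    rw [← neg_one_mul (x * _), map_mul χ (-1)]
    ring
  rw [sum_congr rfl fun χ _ ↦ h χ, sum_comm]
  refine sum_eq_zero fun x _ ↦ ?_
  rw [← mul_sum, sum_mulChar_apply, if_neg, mul_zero]
  rcases eq_or_ne x 1 with rfl | hx
  · simp
  · rw [neg_eq_iff_eq_neg, mul_inv_eq_iff_eq_mul₀ (sub_ne_zero.mpr hx.symm)]
    intro h
    exact one_ne_zero (by linear_combination h : (1 : K) = 0)

theorem sum_jacobiSum_mul_jacobiSum (A B D : MulChar K ℂ) :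
    ∑ χ : MulChar K ℂ, jacobiSum (A * χ) χ⁻¹ * jacobiSum (B * χ) (D * χ⁻¹) =
      ((Fintype.card K : ℂ) - 1) * jacobiSum (A * D) B := by
  have h : ∀ χ : MulChar K ℂ, jacobiSum (A * χ) χ⁻¹ = ∑ x, A x * χ (x * (1 - x)⁻¹) := fun χ ↦ by
    rw [← one_mul χ⁻¹, jacobiSum_mul_mul_inv_eq_sum]
    refine sum_congr rfl fun x _ ↦ ?_
    rcases eq_or_ne x 1 with rfl | hx
    · simp [MulChar.map_zero]
    · rw [MulChar.one_apply (sub_ne_zero.mpr hx.symm).isUnit, mul_one]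
  simp only [h, jacobiSum_mul_mul_inv_eq_sum]
  rw [sum_mulChar_sum_mul_sum,
    sum_sum_ite_odds_mul_odds_eq_one A.map_zero (by simp [MulChar.map_zero])]
  simp only [jacobiSum, MulChar.mul_apply, sub_sub_cancel]
  congr 1
  exact sum_congr rfl fun x _ ↦ by ring

theorem sum_gaussSum_mul_gaussSum_mul_gaussSum_mul_gaussSum (hψ : ψ ≠ 1) (A B D : MulChar K ℂ) :
    ∑ χ : MulChar K ℂ,
        gaussSum (A * χ) ψ * gaussSum χ⁻¹ ψ * (gaussSum (B * χ) ψ * gaussSum (D * χ⁻¹) ψ) =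
      ((Fintype.card K : ℂ) - 1) * (jacobiSum (A * D) B * gaussSum A ψ * gaussSum (B * D) ψ +
        if A = 1 ∧ B * D = 1 then ((Fintype.card K : ℂ) - 1) ^ 2 * (A * B) (-1) else 0) := by
  set δA : ℂ := if A = 1 then (Fintype.card K : ℂ) - 1 else 0
  set δBD : ℂ := if B * D = 1 then (Fintype.card K : ℂ) - 1 else 0
  have h : ∀ χ : MulChar K ℂ,
      gaussSum (A * χ) ψ * gaussSum χ⁻¹ ψ * (gaussSum (B * χ) ψ * gaussSum (D * χ⁻¹) ψ) =
        jacobiSum (A * χ) χ⁻¹ * jacobiSum (B * χ) (D * χ⁻¹) * (gaussSum A ψ * gaussSum (B * D) ψ) +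
        χ (-1) * jacobiSum (A * χ) χ⁻¹ * (gaussSum A ψ * δBD * B (-1)) +
        χ (-1) * jacobiSum (B * χ) (D * χ⁻¹) * (δA * A (-1) * gaussSum (B * D) ψ) +
        χ (-1) * χ (-1) * (δA * δBD * (A * B) (-1)) := by
    intro χ
    rw [gaussSum_mul_gaussSum_eq hψ, gaussSum_mul_gaussSum_eq hψ, mul_inv_cancel_right,
      mul_mul_mul_comm, mul_inv_cancel, mul_one, MulChar.mul_apply, MulChar.mul_apply,
      MulChar.mul_apply]
    ring
  have h₁ := sum_apply_neg_one_mul_jacobiSum A 1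
  simp only [one_mul] at h₁
  have h₂ : ∑ χ : MulChar K ℂ, χ (-1) * χ (-1) = (Fintype.card K : ℂ) - 1 := by
    simp only [← map_mul, neg_mul_neg, mul_one, sum_mulChar_apply, if_true]
  simp only [sum_congr rfl fun χ _ ↦ h χ, sum_add_distrib, ← sum_mul, sum_jacobiSum_mul_jacobiSum,
    h₁, h₂, sum_apply_neg_one_mul_jacobiSum]
  simp only [δA, δBD, ite_and]
  split_ifs <;> ring

end

theorem mcCarthyF21_at_one_general (ψ : AddChar F ℂ) (hψ : ψ ≠ 1)
    (A B C : MulChar F ℂ) :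
    (1 / ((Fintype.card F : ℂ) - 1)) *
        ∑ χ : MulChar F ℂ, (gaussSum (A * χ) ψ / gaussSum A ψ) *
          (gaussSum (B * χ) ψ / gaussSum B ψ) *
          (gaussSum (C⁻¹ * χ⁻¹) ψ / gaussSum C⁻¹ ψ) *
          gaussSum χ⁻¹ ψ * (χ (-1)) ^ 2 * χ (1 : F) =
      gaussSum (A * C⁻¹) ψ * gaussSum (B * C⁻¹) ψ /
          (gaussSum C⁻¹ ψ * gaussSum (A * B * C⁻¹) ψ) +
        (Fintype.card F : ℂ) * ((Fintype.card F : ℂ) - 1) * (A * B) (-1) *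
          (if A * B * C⁻¹ = 1 then 1 else 0) /
          (gaussSum A ψ * gaussSum B ψ * gaussSum C⁻¹ ψ) := by
  have hq : (Fintype.card F : ℂ) - 1 ≠ 0 :=
    sub_ne_zero.mpr (by exact_mod_cast Fintype.one_lt_card.ne')
  have hg := gaussSum_ne_zero hψ
  have hterm : ∀ χ : MulChar F ℂ,
      (gaussSum (A * χ) ψ / gaussSum A ψ) * (gaussSum (B * χ) ψ / gaussSum B ψ) *
          (gaussSum (C⁻¹ * χ⁻¹) ψ / gaussSum C⁻¹ ψ) * gaussSum χ⁻¹ ψ * (χ (-1)) ^ 2 * χ (1 : F) =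
        gaussSum (A * χ) ψ * gaussSum χ⁻¹ ψ * (gaussSum (B * χ) ψ * gaussSum (C⁻¹ * χ⁻¹) ψ) /
          (gaussSum A ψ * gaussSum B ψ * gaussSum C⁻¹ ψ) := fun χ ↦ by
    rw [map_one, sq, χ.apply_neg_one_mul_self]
    field_simp
  rw [sum_congr rfl fun χ _ ↦ hterm χ, ← sum_div,
    sum_gaussSum_mul_gaussSum_mul_gaussSum_mul_gaussSum hψ, mul_div_assoc, ← mul_assoc,
    one_div_mul_cancel hq, one_mul]
  rcases eq_or_ne (A * B * C⁻¹) 1 with h | h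
  · have hBC : B * C⁻¹ = A⁻¹ := eq_inv_of_mul_eq_one_right (by rwa [← mul_assoc])
    have hAC : A * C⁻¹ = B⁻¹ := eq_inv_of_mul_eq_one_left (by rwa [mul_right_comm])
    simp only [h, if_true, hBC, hAC, inv_eq_one, and_self, gaussSum_one_left hψ, mul_one]
    field_simp [hg A, hg B, hg C⁻¹]
    linear_combination jacobiSum_inv_mul_gaussSum_mul_gaussSum_inv hψ A B
  · have hδ : ¬(A = 1 ∧ B * C⁻¹ = 1) := fun ⟨hA, hBC⟩ ↦ h (by rw [mul_assoc, hBC, hA, one_mul])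
    rw [if_neg h, if_neg hδ, add_zero, mul_zero, zero_div, add_zero,
      jacobiSum_eq_gaussSum_mul_gaussSum_div_gaussSum (Nat.cast_ne_zero.mpr Fintype.card_ne_zero)
        (by rwa [mul_right_comm]) (AddChar.IsPrimitive.of_ne_one hψ), mul_right_comm A C⁻¹ B]
    field_simp [hg A, hg B, hg C⁻¹, hg (A * B * C⁻¹)]

/-- McCarthy's `₂F₁*` evaluated at `x = 1`:
`₂F₁*(A,B;C|1) = g(AC̄)g(BC̄)/(g(C̄)g(ABC̄)) + q(q-1)·AB(-1)·δ(ABC̄)/(g(A)g(B)g(C̄))`. -/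
theorem mcCarthyF21_at_one (hq : Odd (Fintype.card F)) (ψ : AddChar F ℂ) (hψ : ψ ≠ 1)
    (A B C : MulChar F ℂ) :
    (1 / ((Fintype.card F : ℂ) - 1)) *
        ∑ χ : MulChar F ℂ, (gaussSum (A * χ) ψ / gaussSum A ψ) *
          (gaussSum (B * χ) ψ / gaussSum B ψ) *
          (gaussSum (C⁻¹ * χ⁻¹) ψ / gaussSum C⁻¹ ψ) *
          gaussSum χ⁻¹ ψ * (χ (-1)) ^ 2 * χ (1 : F) =
      gaussSum (A * C⁻¹) ψ * gaussSum (B * C⁻¹) ψ /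
          (gaussSum C⁻¹ ψ * gaussSum (A * B * C⁻¹) ψ) +
        (Fintype.card F : ℂ) * ((Fintype.card F : ℂ) - 1) * (A * B) (-1) *
          (if A * B * C⁻¹ = 1 then 1 else 0) /
          (gaussSum A ψ * gaussSum B ψ * gaussSum C⁻¹ ψ) :=
  mcCarthyF21_at_one_general ψ hψ A B C
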